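/- arXiv:2306.17001 — 3 statements merged into one kernel-verified Lean document; each statement's English description precedes it below -/
import Mathlib

section
/- Let Δ_n be the n×n difference operator and w ∈ ℝ^{n+1} a vector with sup_k |w_k| ≤ κ. Then there exist constants c₁, c₂, c₃ > 0 depending only on κ such that for every v ∈ ℝ^n, c₁‖v‖_{*n}² − c₂‖v‖₂² ≤ ⟨v, H̄_n v⟩ ≤ c₃‖v‖_{*n}², where ⟨v, H̄_n v⟩ = n^{-1}(Σ_{k=0}^{n}(Δv_k)² + Σ_{k=0}^{n}(Δw_k) v_k²), Δv_k = n(v_{k+1}−v_k), v_0 = v_{n+1} = 0, ‖v‖₂² = n^{-1}Σ_{k=1}^n v_k², and ‖v‖_{*n}² = ‖Δ_n v‖₂² + ‖v‖₂². -/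
open Finset

/-- Discrete Sobolev-type two-sided bound for the quadratic form of the discrete
Schrödinger operator `H̄_n = -Δ_n Δ_nᵗ + (Δ_n w)_×` with zero boundary conditions,
with constants depending only on the uniform bound `κ` on `w`. -/
theorem stmt4 (κ : ℝ) (hκ : 0 < κ) :
    ∃ c₁ > (0 : ℝ), ∃ c₂ > (0 : ℝ), ∃ c₃ > (0 : ℝ),
      ∀ (n : ℕ), 1 ≤ n → ∀ (w v : ℕ → ℝ),
        (∀ k ≤ n + 1, |w k| ≤ κ) → v 0 = 0 → v (n + 1) = 0 →
        let Δ : (ℕ → ℝ) → ℕ → ℝ := fun u k => (n : ℝ) * (u (k + 1) - u k)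
        let Q : ℝ := (n : ℝ)⁻¹ *
          ((∑ k ∈ Finset.range (n + 1), (Δ v k) ^ 2) +
            ∑ k ∈ Finset.range (n + 1), (Δ w k) * (v k) ^ 2)
        let N2 : ℝ := (n : ℝ)⁻¹ * ∑ k ∈ Finset.Icc 1 n, (v k) ^ 2
        let Nstar : ℝ := (n : ℝ)⁻¹ * (∑ k ∈ Finset.range (n + 1), (Δ v k) ^ 2) + N2
        c₁ * Nstar - c₂ * N2 ≤ Q ∧ Q ≤ c₃ * Nstar := by
  refine ⟨1/2, by norm_num, 2*κ^2 + 1/2, by positivity, 2*κ^2 + 3/2, by positivity, ?_⟩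
  intro n hn w v hw hv0 hvn Δ Q N2 Nstar
  have hnpos : (0:ℝ) < n := by exact_mod_cast hn
  have ha : (0:ℝ) < (n:ℝ)⁻¹ := by positivity
  set A := ∑ k ∈ Finset.range (n+1), (Δ v k)^2 with hA
  set S := ∑ k ∈ Finset.range (n+1), (Δ w k) * (v k)^2 with hS
  set T := ∑ k ∈ Finset.Icc 1 n, (v k)^2 with hT
  have hApos : 0 ≤ A := Finset.sum_nonneg fun k _ => sq_nonneg _
  have hTpos : 0 ≤ T := Finset.sum_nonneg fun k _ => sq_nonneg _
  -- Abel summation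
  have habel : S = -∑ k ∈ Finset.range (n+1), w (k+1) * Δ v k * (v k + v (k+1)) := by
    have key : ∀ k, Δ w k * (v k)^2 + w (k+1) * Δ v k * (v k + v (k+1)) =
        (n:ℝ) * w (k+1) * (v (k+1))^2 - (n:ℝ) * w k * (v k)^2 := by
      intro k; simp only [Δ]; ring
    have htel : ∑ k ∈ Finset.range (n+1),
        ((n:ℝ) * w (k+1) * (v (k+1))^2 - (n:ℝ) * w k * (v k)^2)
        = (n:ℝ) * w (n+1) * (v (n+1))^2 - (n:ℝ) * w 0 * (v 0)^2 :=
      Finset.sum_range_sub (fun k => (n:ℝ) * w k * (v k)^2) (n+1)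
    have hcomb : S + ∑ k ∈ Finset.range (n+1), w (k+1) * Δ v k * (v k + v (k+1)) = 0 := by
      rw [hS, ← Finset.sum_add_distrib]
      rw [Finset.sum_congr rfl (fun k _ => key k), htel, hv0, hvn]
      ring
    linarith
  -- term bound
  have hterm : ∀ k ∈ Finset.range (n+1),
      |w (k+1) * Δ v k * (v k + v (k+1))| ≤
        (1/2) * (Δ v k)^2 + κ^2 * ((v k)^2 + (v (k+1))^2) := by
    intro k hk
    rw [Finset.mem_range] at hk
    have hwk : |w (k+1)| ≤ κ := hw (k+1) (by omega)
    have h1 : |w (k+1) * Δ v k * (v k + v (k+1))| ≤ κ * (|Δ v k| * |v k + v (k+1)|) := by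
      rw [abs_mul, abs_mul, mul_assoc]
      exact mul_le_mul_of_nonneg_right hwk (by positivity)
    have h2 : κ * (|Δ v k| * |v k + v (k+1)|) ≤
        (1/2) * (Δ v k)^2 + κ^2 * ((v k)^2 + (v (k+1))^2) := by
      nlinarith [sq_nonneg (|Δ v k| - κ * |v k + v (k+1)|), sq_abs (Δ v k),
        sq_abs (v k + v (k+1)), sq_nonneg (v k - v (k+1)), sq_nonneg (v k + v (k+1))]
    linarith
  -- split sum identity
  have hTr : ∑ k ∈ Finset.range n, (v (k+1))^2 = T := by
    rw [hT, ← Finset.Ico_add_one_right_eq_Icc, Finset.sum_Ico_eq_sum_range]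
    exact Finset.sum_congr (by norm_num) fun k _ => by rw [add_comm]
  have hsplit : ∑ k ∈ Finset.range (n+1), ((v k)^2 + (v (k+1))^2) = 2 * T := by
    rw [Finset.sum_add_distrib, Finset.sum_range_succ', Finset.sum_range_succ, hTr, hv0, hvn]
    ring
  -- bound on |S|
  have habs : |S| ≤ (1/2) * A + 2 * κ^2 * T := by
    calc |S| = |∑ k ∈ Finset.range (n+1), w (k+1) * Δ v k * (v k + v (k+1))| := by
          rw [habel, abs_neg]
      _ ≤ ∑ k ∈ Finset.range (n+1), |w (k+1) * Δ v k * (v k + v (k+1))| :=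
          Finset.abs_sum_le_sum_abs _ _
      _ ≤ ∑ k ∈ Finset.range (n+1),
            ((1/2) * (Δ v k)^2 + κ^2 * ((v k)^2 + (v (k+1))^2)) :=
          Finset.sum_le_sum hterm
      _ = (1/2) * A + 2 * κ^2 * T := by
          rw [Finset.sum_add_distrib, ← Finset.mul_sum, ← Finset.mul_sum, hsplit, hA]
          ring
  have hSle : S ≤ (1/2) * A + 2 * κ^2 * T := le_trans (le_abs_self S) habs
  have hSge : -((1/2) * A + 2 * κ^2 * T) ≤ S := by
    have := neg_abs_le S; linarith
  have hQ : Q = (n:ℝ)⁻¹ * (A + S) := rfl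
  have hN2 : N2 = (n:ℝ)⁻¹ * T := rfl
  have hNstar : Nstar = (n:ℝ)⁻¹ * A + N2 := rfl
  rw [hQ, hN2, hNstar]
  constructor
  · nlinarith [mul_le_mul_of_nonneg_left hSge (le_of_lt ha)]
  · nlinarith [mul_le_mul_of_nonneg_left hSle (le_of_lt ha), mul_nonneg ha.le hTpos,
      mul_nonneg ha.le hApos, sq_nonneg κ, mul_nonneg (mul_nonneg ha.le hTpos) (sq_nonneg κ)]
end

section
/- Let f₁, f₂ : [0,T] → ℝ be measurable functions possessing occupation-density local times L_h(f₁), L_h(f₂). Then for every ε > 0, sup_{h∈ℝ} |L_h(f₁) − L_h(f₂)| ≤ (T/ε²)·sup_{0≤t≤T}|f₁(t) − f₂(t)| + Σ_{i=1}^{2} sup_{h₁,h₂∈ℝ, |h₁−h₂|≤ε} |L_{h₁}(f_i) − L_{h₂}(f_i)|. -/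
/-!
Fix a level `h` and consider the windows `I_c = [c, c + ε]` for `c ∈ [h - ε, h]`; every
point of such a window is within `ε` of `h`. On `I_c` the occupation-density identity and the
moduli of continuity give `ε (L₁ h - M₁) ≤ μ₁ I_c` and `μ₂ I_c ≤ ε (L₂ h + M₂)`, where `μᵢ` is
the occupation measure of `fᵢ`, and `μ₁ I_c - μ₂ I_c` is at most the time during which `f₁`
lies in `I_c` while `f₂` does not. By Fubini, that time integrates over `c` to
`∫₀ᵀ |{c : f₁ t ∈ I_c, f₂ t ∉ I_c}| dt ≤ T M₀`, so `ε² (L₁ h - L₂ h - M₁ - M₂) ≤ T M₀`.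
-/

open MeasureTheory

/-- `L` is the occupation-density local time of `f` on `[0,T]`: for every measurable
set of levels `A`, `∫_A L(h) dh` equals the Lebesgue measure of the times `t ∈ [0,T]`
at which `f(t) ∈ A`. -/
def HasLocalTime (f : ℝ → ℝ) (T : ℝ) (L : ℝ → ℝ) : Prop :=
  ∀ A : Set ℝ, MeasurableSet A →
    (∫ h in A, L h) = (volume {t ∈ Set.Icc (0 : ℝ) T | f t ∈ A}).toReal

open Set
open scoped ENNReal

section LocalTime

variable {f L : ℝ → ℝ} {T : ℝ}

theorem HasLocalTime.integrable (hT : 0 < T) (hL : HasLocalTime f T L) : Integrable L := by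
  by_contra hL_int
  have h_univ := hL univ MeasurableSet.univ
  simp only [mem_univ, sep_true, Real.volume_Icc, sub_zero, ENNReal.toReal_ofReal hT.le,
    Measure.restrict_univ, integral_undef hL_int] at h_univ
  exact hT.ne h_univ

theorem HasLocalTime.setIntegral_eq (hL : HasLocalTime f T L) {A : Set ℝ} (hA : MeasurableSet A) :
    ∫ h in A, L h = (volume.restrict (Icc 0 T) (f ⁻¹' A)).toReal := by
  rw [hL A hA, Measure.restrict_apply' measurableSet_Icc, inter_comm]
  rfl

end LocalTime

theorem abs_setIntegral_sub_mul_le {α : Type*} [MeasurableSpace α] {μ : Measure α}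
    {g : α → ℝ} {s : Set α} {c M : ℝ} (hs : μ s < ∞) (hg : IntegrableOn g s μ)
    (hM : ∀ x ∈ s, |g x - c| ≤ M) :
    |∫ x in s, g x ∂μ - μ.real s * c| ≤ μ.real s * M := by
  have h_const : ∫ _ in s, c ∂μ = μ.real s * c := by rw [setIntegral_const, smul_eq_mul]
  rw [← h_const, ← integral_sub hg (integrableOn_const hs.ne), mul_comm]
  exact norm_setIntegral_le_of_norm_le_const (f := fun x => g x - c) hs hM

theorem volume_setOf_mem_Icc_and_notMem_Icc_le (a b ε : ℝ) :
    volume {c : ℝ | a ∈ Icc c (c + ε) ∧ b ∉ Icc c (c + ε)} ≤ ENNReal.ofReal |a - b| := by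
  have h_sub : {c : ℝ | a ∈ Icc c (c + ε) ∧ b ∉ Icc c (c + ε)} ⊆
      Ico (a - ε) (b - ε) ∪ Ioc b a := by
    rintro c ⟨⟨hca, hac⟩, hb⟩
    simp only [mem_Icc, not_and_or, not_le] at hb
    rcases hb with hb | hb
    · exact Or.inr ⟨hb, hca⟩
    · exact Or.inl ⟨by linarith, by linarith⟩
  calc _ ≤ volume (Ico (a - ε) (b - ε)) + volume (Ioc b a) :=
        (measure_mono h_sub).trans (measure_union_le _ _)
    _ = ENNReal.ofReal (b - a) + ENNReal.ofReal (a - b) := by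
        rw [Real.volume_Ico, Real.volume_Ioc, sub_sub_sub_cancel_right]
    _ = ENNReal.ofReal |a - b| := by
        rcases le_total a b with hab | hab
        · rw [ENNReal.ofReal_of_nonpos (sub_nonpos.2 hab), add_zero, abs_sub_comm,
            abs_of_nonneg (sub_nonneg.2 hab)]
        · rw [ENNReal.ofReal_of_nonpos (sub_nonpos.2 hab), zero_add,
            abs_of_nonneg (sub_nonneg.2 hab)]

theorem lintegral_measure_preimage_Icc_diff_le {α : Type*} [MeasurableSpace α] (ν : Measure α)
    [SFinite ν] {f g : α → ℝ} (hf : Measurable f) (hg : Measurable g) (ε : ℝ) :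
    ∫⁻ c, ν (f ⁻¹' Icc c (c + ε) \ g ⁻¹' Icc c (c + ε)) ≤ ∫⁻ t, ENNReal.ofReal |f t - g t| ∂ν := by
  set E : Set (ℝ × α) := {p | f p.2 ∈ Icc p.1 (p.1 + ε) ∧ g p.2 ∉ Icc p.1 (p.1 + ε)}
  have hE : MeasurableSet E := by
    have h_mem : ∀ φ : α → ℝ, Measurable φ →
        MeasurableSet {p : ℝ × α | φ p.2 ∈ Icc p.1 (p.1 + ε)} := fun φ hφ =>
      (measurableSet_le measurable_fst (hφ.comp measurable_snd)).inter
        (measurableSet_le (hφ.comp measurable_snd) (measurable_fst.add_const ε))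
    exact (h_mem f hf).inter (h_mem g hg).compl
  calc ∫⁻ c, ν (f ⁻¹' Icc c (c + ε) \ g ⁻¹' Icc c (c + ε))
      = ∫⁻ t, volume {c : ℝ | f t ∈ Icc c (c + ε) ∧ g t ∉ Icc c (c + ε)} ∂ν :=
        (Measure.prod_apply hE).symm.trans (Measure.prod_apply_symm hE)
    _ ≤ ∫⁻ t, ENNReal.ofReal |f t - g t| ∂ν :=
        lintegral_mono fun t => volume_setOf_mem_Icc_and_notMem_Icc_le _ _ _

theorem HasLocalTime.ofReal_mul_sub_le_measure_diff {T : ℝ} (hT : 0 < T) {f₁ f₂ L₁ L₂ : ℝ → ℝ}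
    (hL₁ : HasLocalTime f₁ T L₁) (hL₂ : HasLocalTime f₂ T L₂) {ε : ℝ} (hε : 0 ≤ ε)
    {M₁ M₂ : ℝ} (hM₁ : ∀ h₁ h₂ : ℝ, |h₁ - h₂| ≤ ε → |L₁ h₁ - L₁ h₂| ≤ M₁)
    (hM₂ : ∀ h₁ h₂ : ℝ, |h₁ - h₂| ≤ ε → |L₂ h₁ - L₂ h₂| ≤ M₂) {h c : ℝ} (hc : c ∈ Icc (h - ε) h) :
    ENNReal.ofReal (ε * (L₁ h - L₂ h - M₁ - M₂)) ≤
      volume.restrict (Icc 0 T) (f₁ ⁻¹' Icc c (c + ε) \ f₂ ⁻¹' Icc c (c + ε)) := by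
  obtain ⟨hhc, hch⟩ := hc
  set ν := volume.restrict (Icc 0 T)
  set I := Icc c (c + ε)
  have hI_fin : volume I < ∞ := measure_Icc_lt_top
  have hI_real : volume.real I = ε := by simp [I, hε]
  have h_near : ∀ x ∈ I, |x - h| ≤ ε := fun x ⟨hcx, hxc⟩ =>
    abs_le.2 ⟨by linarith, by linarith⟩
  have h_window : ∀ {f L : ℝ → ℝ} {M : ℝ}, HasLocalTime f T L →
      (∀ h₁ h₂ : ℝ, |h₁ - h₂| ≤ ε → |L h₁ - L h₂| ≤ M) →
      |(ν (f ⁻¹' I)).toReal - ε * L h| ≤ ε * M := fun hL hM => by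
    have := abs_setIntegral_sub_mul_le hI_fin (hL.integrable hT).integrableOn
      fun x hx => hM x h (h_near x hx)
    rwa [hL.setIntegral_eq measurableSet_Icc, hI_real] at this
  have h_split : (ν (f₁ ⁻¹' I)).toReal ≤
      (ν (f₂ ⁻¹' I)).toReal + (ν (f₁ ⁻¹' I \ f₂ ⁻¹' I)).toReal := by
    rw [← ENNReal.toReal_add (measure_ne_top _ _) (measure_ne_top _ _)]
    exact ENNReal.toReal_mono (ENNReal.add_ne_top.2 ⟨measure_ne_top _ _, measure_ne_top _ _⟩)
      (tsub_le_iff_left.1 le_measure_sdiff)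
  have h₁ := abs_le.1 (h_window hL₁ hM₁)
  have h₂ := abs_le.1 (h_window hL₂ hM₂)
  exact ENNReal.ofReal_le_of_le_toReal (by linarith)

theorem HasLocalTime.sub_le {T : ℝ} (hT : 0 < T) {f₁ f₂ L₁ L₂ : ℝ → ℝ}
    (hf₁ : Measurable f₁) (hf₂ : Measurable f₂)
    (hL₁ : HasLocalTime f₁ T L₁) (hL₂ : HasLocalTime f₂ T L₂) {ε : ℝ} (hε : 0 < ε)
    {M₀ M₁ M₂ : ℝ} (hM₀ : ∀ t ∈ Icc (0 : ℝ) T, |f₁ t - f₂ t| ≤ M₀)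
    (hM₁ : ∀ h₁ h₂ : ℝ, |h₁ - h₂| ≤ ε → |L₁ h₁ - L₁ h₂| ≤ M₁)
    (hM₂ : ∀ h₁ h₂ : ℝ, |h₁ - h₂| ≤ ε → |L₂ h₁ - L₂ h₂| ≤ M₂) (h : ℝ) :
    L₁ h - L₂ h ≤ T / ε ^ 2 * M₀ + M₁ + M₂ := by
  set X := L₁ h - L₂ h - M₁ - M₂
  set ν := volume.restrict (Icc 0 T)
  have h_avg : ENNReal.ofReal (ε * X) * ENNReal.ofReal ε ≤ ENNReal.ofReal M₀ * ENNReal.ofReal T :=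
    calc ENNReal.ofReal (ε * X) * ENNReal.ofReal ε
        = ∫⁻ _ in Icc (h - ε) h, ENNReal.ofReal (ε * X) := by
          rw [setLIntegral_const, Real.volume_Icc, sub_sub_cancel]
      _ ≤ ∫⁻ c in Icc (h - ε) h, ν (f₁ ⁻¹' Icc c (c + ε) \ f₂ ⁻¹' Icc c (c + ε)) :=
          setLIntegral_mono' measurableSet_Icc fun _ hc =>
            hL₁.ofReal_mul_sub_le_measure_diff hT hL₂ hε.le hM₁ hM₂ hc
      _ ≤ ∫⁻ c, ν (f₁ ⁻¹' Icc c (c + ε) \ f₂ ⁻¹' Icc c (c + ε)) :=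
          setLIntegral_le_lintegral _ _
      _ ≤ ∫⁻ t in Icc 0 T, ENNReal.ofReal |f₁ t - f₂ t| :=
          lintegral_measure_preimage_Icc_diff_le ν hf₁ hf₂ ε
      _ ≤ ∫⁻ _ in Icc 0 T, ENNReal.ofReal M₀ :=
          setLIntegral_mono measurable_const fun t ht => ENNReal.ofReal_le_ofReal (hM₀ t ht)
      _ = ENNReal.ofReal M₀ * ENNReal.ofReal T := by
          rw [setLIntegral_const, Real.volume_Icc, sub_zero]
  have hM₀_nonneg : 0 ≤ M₀ := (abs_nonneg _).trans (hM₀ 0 ⟨le_rfl, hT.le⟩)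
  rw [← ENNReal.ofReal_mul' hε.le, ← ENNReal.ofReal_mul hM₀_nonneg,
    ENNReal.ofReal_le_ofReal_iff (by positivity)] at h_avg
  have hX : X ≤ T / ε ^ 2 * M₀ := by
    rw [div_mul_eq_mul_div, le_div_iff₀ (by positivity)]
    linarith
  linarith

/-- Comparison of local times of two functions: the sup-distance of local times is
bounded by `T/ε²` times the sup-distance of the functions plus the level-moduli of
continuity of the two local times at scale `ε`. -/
theorem stmt5 (T : ℝ) (hT : 0 < T) (f₁ f₂ L₁ L₂ : ℝ → ℝ)
    (hf₁ : Measurable f₁) (hf₂ : Measurable f₂)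
    (hL₁ : HasLocalTime f₁ T L₁) (hL₂ : HasLocalTime f₂ T L₂)
    (ε : ℝ) (hε : 0 < ε) (M₀ M₁ M₂ : ℝ)
    (hM₀ : ∀ t ∈ Set.Icc (0 : ℝ) T, |f₁ t - f₂ t| ≤ M₀)
    (hM₁ : ∀ h₁ h₂ : ℝ, |h₁ - h₂| ≤ ε → |L₁ h₁ - L₁ h₂| ≤ M₁)
    (hM₂ : ∀ h₁ h₂ : ℝ, |h₁ - h₂| ≤ ε → |L₂ h₁ - L₂ h₂| ≤ M₂) :
    ∀ h : ℝ, |L₁ h - L₂ h| ≤ T / ε ^ 2 * M₀ + M₁ + M₂ := by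
  intro h
  have h₁₂ := hL₁.sub_le hT hf₁ hf₂ hL₂ hε hM₀ hM₁ hM₂ h
  have h₂₁ := hL₂.sub_le hT hf₂ hf₁ hL₁ hε
    (fun t ht => abs_sub_comm (f₂ t) (f₁ t) ▸ hM₀ t ht) hM₂ hM₁ h
  exact abs_sub_le_iff.2 ⟨h₁₂, by linarith⟩
end

section
/- Let T_n, n ∈ ℕ, be positive reals with T_n n² ∈ ℕ and sup_n |T_n − T| n² < ∞ for some T > 0. Then Ξ(x,y;n,T_n) = (n/2^{T_n n²})·C(T_n n², (T_n n² + ⌊nx⌋ − ⌊ny⌋)/2) converges as n → ∞ to √(2/(πT))·e^{−(x−y)²/(2T)}, uniformly over x, y ∈ [0,1] with ⌊nx⌋ − ⌊ny⌋ of the same parity as T_n n². -/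
/-!
Write `p = m n` and `a = ⌊n x⌋ - ⌊n y⌋`. With `k = (p + a) / 2` heads out of `p` coin flips,
Stirling's formula turns `√p · C(p, k) / 2^p` exactly into a product of three factors: a ratio of
Stirling sequences (tending to `1 / √π`), `√(2 / (1 - t²))` with `t = a / p` (tending to `√2`), and
`exp (-p I(t))`, where `I(t) = t² / 2 + O(t⁴)` is the rate function of the simple random walk, so
`p I(t) → c² / 2` whenever `a / √p → c`. Since `p ~ T n²` and `a / n` is within `1 / n` of `x - y`,
this gives the limit along every filter on which `x - y` converges; uniformity over `x, y` then
follows from the compactness of `[-1, 1] ∋ x - y`, via ultrafilters.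
-/

open Real Filter Topology Stirling

theorem IsCompact.tendsto_of_forall_inf_comap_nhds {ι X Y : Type*} [TopologicalSpace X]
    {K : Set X} (hK : IsCompact K) {l : Filter ι} {g : ι → X} (hg : ∀ᶠ i in l, g i ∈ K)
    {f : ι → Y} {ly : Filter Y} (h : ∀ x ∈ K, Tendsto f (l ⊓ comap g (𝓝 x)) ly) :
    Tendsto f l ly := by
  refine (tendsto_iff_ultrafilter f l ly).2 fun u hu => ?_
  obtain ⟨x, hxK, hx⟩ := hK.ultrafilter_le_nhds (u.map g)
    (by rw [Ultrafilter.coe_map, le_principal_iff]; exact hu hg)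
  exact (h x hxK).mono_left (le_inf hu (map_le_iff_le_comap.1 hx))

theorem tendsto_of_abs_sub_mul_le {ι : Type*} {l : Filter ι} {f g : ι → ℝ} {T K : ℝ}
    (hg : Tendsto g l atTop) (hf : ∀ i, |f i - T| * g i ≤ K) : Tendsto f l (𝓝 T) := by
  rw [tendsto_iff_norm_sub_tendsto_zero]
  refine squeeze_zero_norm' ?_ ((tendsto_const_nhds (x := K)).div_atTop hg)
  filter_upwards [hg.eventually_gt_atTop 0] with i hi
  rw [norm_norm, Real.norm_eq_abs, le_div_iff₀ hi]
  exact hf i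

theorem tendsto_floor_mul_sub_floor_mul_div {ι : Type*} {l : Filter ι} {n : ι → ℕ}
    {x y : ι → ℝ} {d : ℝ} (hn : Tendsto n l atTop)
    (hxy : Tendsto (fun i => x i - y i) l (𝓝 d)) :
    Tendsto (fun i => ((⌊(n i : ℝ) * x i⌋ - ⌊(n i : ℝ) * y i⌋ : ℤ) : ℝ) / n i) l (𝓝 d) := by
  have hnR : Tendsto (fun i => (n i : ℝ)) l atTop := tendsto_natCast_atTop_iff.mpr hn
  have herr : Tendsto (fun i => ((⌊(n i : ℝ) * x i⌋ - ⌊(n i : ℝ) * y i⌋ : ℤ) - n i * (x i - y i))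
      / (n i : ℝ)) l (𝓝 0) := by
    refine squeeze_zero_norm' ?_ ((tendsto_const_nhds (x := (1 : ℝ))).div_atTop hnR)
    filter_upwards [hnR.eventually_gt_atTop 0] with i hi
    rw [Real.norm_eq_abs, abs_div, abs_of_pos hi]
    gcongr
    have := Int.floor_le ((n i : ℝ) * x i)
    have := Int.sub_one_lt_floor ((n i : ℝ) * x i)
    have := Int.floor_le ((n i : ℝ) * y i)
    have := Int.sub_one_lt_floor ((n i : ℝ) * y i)
    rw [abs_le]
    push_cast
    constructor <;> linarith
  have h := hxy.add herr
  rw [add_zero] at h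
  refine h.congr' ?_
  filter_upwards [hnR.eventually_gt_atTop 0] with i hi
  field_simp
  ring

theorem abs_log_one_add_sub_taylor_le {x : ℝ} (hx : |x| ≤ 1 / 2) :
    |log (1 + x) - (x - x ^ 2 / 2 + x ^ 3 / 3)| ≤ 2 * x ^ 4 := by
  have h := abs_log_sub_add_sum_range_le (x := -x) (by rw [abs_neg]; linarith) 3
  simp only [Finset.sum_range_succ, Finset.sum_range_zero, abs_neg, sub_neg_eq_add] at h
  have hx4 : |x| ^ 4 = x ^ 4 := by rw [pow_abs, abs_of_nonneg (by positivity)]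
  calc |log (1 + x) - (x - x ^ 2 / 2 + x ^ 3 / 3)|
      = |_| := by congr 1; norm_num; ring
    _ ≤ |x| ^ 4 / (1 - |x|) := h
    _ ≤ 2 * x ^ 4 := by
      rw [div_le_iff₀ (by linarith), hx4]
      nlinarith [pow_nonneg (abs_nonneg x) 4]

-- Cramér rate function of a fair `±1` step: `C(p, p (1 + t) / 2) / 2^p ≈ exp (-p I(t))`.
noncomputable def randomWalkRate (t : ℝ) : ℝ :=
  ((1 + t) * log (1 + t) + (1 - t) * log (1 - t)) / 2

theorem abs_randomWalkRate_sub_le {t : ℝ} (ht : |t| ≤ 1 / 2) :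
    |randomWalkRate t - t ^ 2 / 2| ≤ 4 * t ^ 4 := by
  have hp := abs_le.1 (abs_log_one_add_sub_taylor_le ht)
  have hm := abs_le.1 (abs_log_one_add_sub_taylor_le (x := -t) (by rwa [abs_neg]))
  rw [← sub_eq_add_neg] at hm
  obtain ⟨ht₁, ht₂⟩ := abs_le.1 ht
  have h4 : 0 ≤ t ^ 4 := by positivity
  have key : randomWalkRate t - t ^ 2 / 2 =
      ((1 + t) * (log (1 + t) - (t - t ^ 2 / 2 + t ^ 3 / 3)) +
        (1 - t) * (log (1 - t) - (-t - (-t) ^ 2 / 2 + (-t) ^ 3 / 3)) + 2 / 3 * t ^ 4) / 2 := by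
    unfold randomWalkRate; ring
  rw [key, abs_le]
  constructor <;> nlinarith [mul_le_mul_of_nonneg_left hp.1 (by linarith : 0 ≤ 1 + t),
    mul_le_mul_of_nonneg_left hp.2 (by linarith : 0 ≤ 1 + t),
    mul_le_mul_of_nonneg_left hm.1 (by linarith : 0 ≤ 1 - t),
    mul_le_mul_of_nonneg_left hm.2 (by linarith : 0 ≤ 1 - t)]

theorem tendsto_mul_randomWalkRate {ι : Type*} {l : Filter ι} {p t : ι → ℝ} {a : ℝ}
    (ht : Tendsto t l (𝓝 0)) (hpt : Tendsto (fun i => p i * t i ^ 2) l (𝓝 a)) :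
    Tendsto (fun i => p i * randomWalkRate (t i)) l (𝓝 (a / 2)) := by
  have herr : Tendsto (fun i => p i * (randomWalkRate (t i) - t i ^ 2 / 2)) l (𝓝 0) := by
    refine squeeze_zero_norm' ?_ (by simpa using (hpt.abs.mul (ht.pow 2)).const_mul 4)
    filter_upwards [ht.eventually (Metric.closedBall_mem_nhds 0 (by norm_num : (0 : ℝ) < 1 / 2))]
      with i hi
    rw [Real.dist_0_eq_abs] at hi
    rw [Real.norm_eq_abs, abs_mul]
    calc |p i| * |randomWalkRate (t i) - t i ^ 2 / 2| ≤ |p i| * (4 * t i ^ 4) :=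
          mul_le_mul_of_nonneg_left (abs_randomWalkRate_sub_le hi) (abs_nonneg _)
      _ = 4 * (|p i| * t i ^ 2 * t i ^ 2) := by ring
  simpa [mul_sub, ← mul_div_assoc] using (hpt.div_const 2).add herr

theorem factorial_eq_stirlingSeq_mul {n : ℕ} (hn : n ≠ 0) :
    (n.factorial : ℝ) = stirlingSeq n * (√(2 * n) * (n / exp 1) ^ n) := by
  rw [stirlingSeq, div_mul_cancel₀]
  have : (0 : ℝ) < n := by positivity
  positivity

theorem exp_neg_mul_randomWalkRate {k q : ℕ} (hk : k ≠ 0) (hq : q ≠ 0) :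
    exp (-((k + q) * randomWalkRate ((k - q) / (k + q)))) =
      ((k + q) / (2 * k)) ^ k * ((k + q) / (2 * q)) ^ q := by
  have hk' : (0 : ℝ) < k := by positivity
  have hq' : (0 : ℝ) < q := by positivity
  have h₁ : 1 + ((k : ℝ) - q) / (k + q) = (2 * k) / (k + q) := by field_simp; ring
  have h₂ : 1 - ((k : ℝ) - q) / (k + q) = (2 * q) / (k + q) := by field_simp; ring
  have hrate : (k + q) * randomWalkRate ((k - q) / (k + q)) =
      k * log ((2 * k) / (k + q)) + q * log ((2 * q) / (k + q)) := by
    rw [randomWalkRate, h₁, h₂]; field_simp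
  rw [hrate, neg_add, exp_add, ← mul_neg, ← mul_neg, exp_nat_mul, exp_nat_mul, ← log_inv,
    ← log_inv, exp_log (by positivity), exp_log (by positivity), inv_div, inv_div]

theorem sqrt_mul_add_choose_div_two_pow_eq {k q : ℕ} (hk : k ≠ 0) (hq : q ≠ 0) :
    √(k + q : ℝ) * ((k + q).choose k : ℝ) / 2 ^ (k + q) =
      stirlingSeq (k + q) / (stirlingSeq k * stirlingSeq q) *
        √(2 / ((1 + (k - q) / (k + q)) * (1 - (k - q) / (k + q)))) *
        exp (-((k + q) * randomWalkRate ((k - q) / (k + q)))) := by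
  have hk' : (0 : ℝ) < k := by positivity
  have hq' : (0 : ℝ) < q := by positivity
  have hsqrt : √(2 / ((1 + ((k : ℝ) - q) / (k + q)) * (1 - (k - q) / (k + q)))) =
      √(k + q : ℝ) * √(2 * (k + q : ℝ)) / (√(2 * k : ℝ) * √(2 * q : ℝ)) := by
    rw [← sqrt_mul (by positivity), ← sqrt_mul (by positivity), ← sqrt_div (by positivity)]
    congr 1
    field_simp
    ring_nf
    field_simp
  rw [Nat.cast_add_choose, factorial_eq_stirlingSeq_mul (by omega), factorial_eq_stirlingSeq_mul hk,
    factorial_eq_stirlingSeq_mul hq, hsqrt, exp_neg_mul_randomWalkRate hk hq]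
  have hs : ∀ {n : ℕ}, n ≠ 0 → stirlingSeq n ≠ 0 := fun hn => by
    obtain ⟨j, rfl⟩ := Nat.exists_eq_succ_of_ne_zero hn; exact (stirlingSeq'_pos j).ne'
  have hsk := hs hk
  have hsq := hs hq
  push_cast
  simp only [pow_add, div_pow, mul_pow]
  field_simp

theorem tendsto_atTop_of_sub_div_add {ι : Type*} {l : Filter ι} {k q : ι → ℕ}
    (hp : Tendsto (fun i => (k i : ℝ) + q i) l atTop)
    (ht : Tendsto (fun i => ((k i : ℝ) - q i) / (k i + q i)) l (𝓝 0)) : Tendsto k l atTop := by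
  refine tendsto_natCast_atTop_iff.mp ((((ht.const_add 1).div_const 2).pos_mul_atTop
    (by norm_num) hp).congr' ?_)
  filter_upwards [hp.eventually_gt_atTop 0] with i hi
  field_simp
  ring

theorem tendsto_sqrt_mul_add_choose_div_two_pow {ι : Type*} {l : Filter ι} {k q : ι → ℕ} {c : ℝ}
    (hp : Tendsto (fun i => (k i : ℝ) + q i) l atTop)
    (hc : Tendsto (fun i => ((k i : ℝ) - q i) / √(k i + q i)) l (𝓝 c)) :
    Tendsto (fun i => √(k i + q i : ℝ) * ((k i + q i).choose (k i) : ℝ) / 2 ^ (k i + q i)) l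
      (𝓝 (√(2 / π) * exp (-c ^ 2 / 2))) := by
  set t := fun i => ((k i : ℝ) - q i) / (k i + q i)
  have hP : ∀ᶠ i in l, 0 < (k i : ℝ) + q i := hp.eventually_gt_atTop 0
  have ht : Tendsto t l (𝓝 0) := by
    refine (hc.div_atTop (tendsto_sqrt_atTop.comp hp)).congr' ?_
    filter_upwards [hP] with i hi
    simp only [Function.comp_apply, t]
    rw [div_div, mul_self_sqrt hi.le]
  have hPt : Tendsto (fun i => ((k i : ℝ) + q i) * t i ^ 2) l (𝓝 (c ^ 2)) := by
    refine (hc.pow 2).congr' ?_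
    filter_upwards [hP] with i hi
    simp only [t]
    rw [div_pow, div_pow, sq_sqrt hi.le]
    field_simp
  have hk : Tendsto k l atTop := tendsto_atTop_of_sub_div_add hp ht
  have hq : Tendsto q l atTop := tendsto_atTop_of_sub_div_add (k := q) (q := k)
    (hp.congr fun i => add_comm _ _)
    (by rw [← neg_zero]; exact ht.neg.congr fun i => by simp only [t]; ring)
  have hkq : Tendsto (fun i => k i + q i) l atTop :=
    tendsto_natCast_atTop_iff.mp (by simpa only [Nat.cast_add] using hp)
  have hstirling := (tendsto_stirlingSeq_sqrt_pi.comp hkq).div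
    ((tendsto_stirlingSeq_sqrt_pi.comp hk).mul (tendsto_stirlingSeq_sqrt_pi.comp hq))
    (by positivity)
  have hsqrt := (tendsto_const_nhds (x := (2 : ℝ))).div ((ht.const_add 1).mul (ht.const_sub 1))
    (by norm_num) |>.sqrt
  have hexp := (tendsto_mul_randomWalkRate ht hPt).neg.rexp
  have hlim : √π / (√π * √π) * √(2 / ((1 + 0) * (1 - 0))) * exp (-(c ^ 2 / 2)) =
      √(2 / π) * exp (-c ^ 2 / 2) := by
    have : √π ≠ 0 := by positivity
    rw [sqrt_div zero_le_two, neg_div]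
    norm_num
    field_simp
  rw [← hlim]
  refine ((hstirling.mul hsqrt).mul hexp).congr' ?_
  filter_upwards [hk.eventually_ne_atTop 0, hq.eventually_ne_atTop 0] with i hki hqi
  exact (sqrt_mul_add_choose_div_two_pow_eq hki hqi).symm

theorem tendsto_sqrt_mul_choose_div_two_pow {ι : Type*} {l : Filter ι} {p : ι → ℕ} {a : ι → ℤ}
    {c : ℝ} (hp : Tendsto p l atTop) (ha : Tendsto (fun i => (a i : ℝ) / √(p i)) l (𝓝 c))
    (hpar : ∀ᶠ i in l, (p i : ℤ) % 2 = a i % 2) :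
    Tendsto (fun i => √(p i) * ((p i).choose (((p i : ℤ) + a i) / 2).toNat : ℝ) / 2 ^ p i) l
      (𝓝 (√(2 / π) * exp (-c ^ 2 / 2))) := by
  have hpR : Tendsto (fun i => (p i : ℝ)) l atTop := tendsto_natCast_atTop_iff.mpr hp
  have hsqrt : Tendsto (fun i => √(p i : ℝ)) l atTop := tendsto_sqrt_atTop.comp hpR
  have hbound : ∀ᶠ i in l, |a i| ≤ (p i : ℤ) := by
    filter_upwards [ha.abs.eventually (gt_mem_nhds (lt_add_one |c|)),
      hsqrt.eventually_ge_atTop (|c| + 1), hpR.eventually_gt_atTop 0] with i hac hpc hp0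
    have hsp : 0 < √(p i : ℝ) := sqrt_pos.2 hp0
    rw [abs_div, abs_of_pos hsp, div_lt_iff₀ hsp] at hac
    have : |(a i : ℝ)| ≤ p i := calc
      |(a i : ℝ)| ≤ (|c| + 1) * √(p i) := hac.le
      _ ≤ √(p i) * √(p i) := by gcongr
      _ = p i := mul_self_sqrt hp0.le
    exact_mod_cast this
  set k := fun i => (((p i : ℤ) + a i) / 2).toNat
  set q := fun i => (((p i : ℤ) - a i) / 2).toNat
  -- `|a| ≤ p` and the parity make `(p ± a) / 2` exact, so `k + q = p` and `k - q = a`.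
  have hkq : ∀ᶠ i in l, k i + q i = p i ∧ (k i : ℤ) - q i = a i := by
    filter_upwards [hbound, hpar] with i hb hpi
    rw [abs_le] at hb
    have hk : (k i : ℤ) = ((p i : ℤ) + a i) / 2 := Int.toNat_of_nonneg (by omega)
    have hq : (q i : ℤ) = ((p i : ℤ) - a i) / 2 := Int.toNat_of_nonneg (by omega)
    omega
  have hkqR : ∀ᶠ i in l, (k i : ℝ) + q i = p i ∧ (k i : ℝ) - q i = a i := by
    filter_upwards [hkq] with i hi
    exact ⟨by exact_mod_cast hi.1, by exact_mod_cast hi.2⟩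
  have := tendsto_sqrt_mul_add_choose_div_two_pow (k := k) (q := q) (c := c)
    (hpR.congr' (by filter_upwards [hkqR] with i hi using hi.1.symm))
    (ha.congr' (by filter_upwards [hkqR] with i hi; rw [hi.1, hi.2]))
  refine this.congr' ?_
  filter_upwards [hkq, hkqR] with i hi hiR
  rw [hiR.1, hi.1]

theorem tendsto_div_two_pow_mul_choose {ι : Type*} {l : Filter ι} {n p : ι → ℕ} {a : ι → ℤ}
    {T d : ℝ} (hT : 0 < T) (hn : Tendsto n l atTop)
    (hpn : Tendsto (fun i => (p i : ℝ) / n i ^ 2) l (𝓝 T))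
    (han : Tendsto (fun i => (a i : ℝ) / n i) l (𝓝 d))
    (hpar : ∀ᶠ i in l, (p i : ℤ) % 2 = a i % 2) :
    Tendsto (fun i => (n i : ℝ) / 2 ^ p i * ((p i).choose (((p i : ℤ) + a i) / 2).toNat : ℝ)) l
      (𝓝 (√(2 / (π * T)) * exp (-d ^ 2 / (2 * T)))) := by
  have hnR : Tendsto (fun i => (n i : ℝ)) l atTop := tendsto_natCast_atTop_iff.mpr hn
  have hn0 : ∀ᶠ i in l, (0 : ℝ) < n i := hnR.eventually_gt_atTop 0
  have hp : Tendsto p l atTop := tendsto_natCast_atTop_iff.mp <|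
    (hpn.pos_mul_atTop hT ((tendsto_pow_atTop two_ne_zero).comp hnR)).congr' <| by
      filter_upwards [hn0] with i hi
      simp only [Function.comp_apply]
      field_simp
  have hp0 : ∀ᶠ i in l, (0 : ℝ) < p i :=
    (tendsto_natCast_atTop_iff.mpr hp).eventually_gt_atTop 0
  have hns : Tendsto (fun i => (n i : ℝ) / √(p i)) l (𝓝 (√T)⁻¹) :=
    (hpn.sqrt.inv₀ (sqrt_pos.2 hT).ne').congr' <| by
      filter_upwards [hn0] with i hi
      rw [sqrt_div' _ (sq_nonneg _), sqrt_sq hi.le, inv_div]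
  have hclt := tendsto_sqrt_mul_choose_div_two_pow hp ((han.mul hns).congr' <| by
      filter_upwards [hn0] with i hi
      field_simp) hpar
  have hlim : (√T)⁻¹ * (√(2 / π) * exp (-(d * (√T)⁻¹) ^ 2 / 2)) =
      √(2 / (π * T)) * exp (-d ^ 2 / (2 * T)) := by
    rw [mul_pow, inv_pow, sq_sqrt hT.le, ← div_div, sqrt_div' _ hT.le]
    ring_nf
  rw [← hlim]
  refine (hns.mul hclt).congr' ?_
  filter_upwards [hp0] with i hi
  field_simp

/-- Convergence along `comap Prod.fst atTop ⊓ 𝓟 S` on triples `(n, x, y)` is convergence as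
`n → ∞`, uniformly over the admissible `(x, y)` collected in `S`. -/
theorem tendsto_div_two_pow_mul_choose_sub_gaussian {m : ℕ → ℕ} {T : ℝ} (hT : 0 < T)
    (hmT : Tendsto (fun n : ℕ => (m n : ℝ) / n ^ 2) atTop (𝓝 T)) :
    Tendsto (fun z : ℕ × ℝ × ℝ => (z.1 : ℝ) / 2 ^ m z.1 *
        ((m z.1).choose (((m z.1 : ℤ) + ⌊(z.1 : ℝ) * z.2.1⌋ - ⌊(z.1 : ℝ) * z.2.2⌋) / 2).toNat : ℝ) -
        √(2 / (π * T)) * exp (-(z.2.1 - z.2.2) ^ 2 / (2 * T)))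
      (comap Prod.fst atTop ⊓ 𝓟 {z | z.2.1 ∈ Set.Icc 0 1 ∧ z.2.2 ∈ Set.Icc 0 1 ∧
        (m z.1 : ℤ) % 2 = (⌊(z.1 : ℝ) * z.2.1⌋ - ⌊(z.1 : ℝ) * z.2.2⌋) % 2}) (𝓝 0) := by
  set S : Set (ℕ × ℝ × ℝ) := {z | z.2.1 ∈ Set.Icc 0 1 ∧ z.2.2 ∈ Set.Icc 0 1 ∧
    (m z.1 : ℤ) % 2 = (⌊(z.1 : ℝ) * z.2.1⌋ - ⌊(z.1 : ℝ) * z.2.2⌋) % 2}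
  have hS : S ∈ comap Prod.fst atTop ⊓ 𝓟 S := mem_inf_of_right (mem_principal_self S)
  refine (isCompact_Icc (a := (-1 : ℝ)) (b := 1)).tendsto_of_forall_inf_comap_nhds
    (g := fun z => z.2.1 - z.2.2) ?_ fun d _ => ?_
  · filter_upwards [hS] with z hz
    obtain ⟨⟨hx0, hx1⟩, ⟨hy0, hy1⟩, -⟩ := hz
    exact ⟨by linarith, by linarith⟩
  set l := comap Prod.fst atTop ⊓ 𝓟 S ⊓ comap (fun z => z.2.1 - z.2.2) (𝓝 d)
  have hn : Tendsto Prod.fst l atTop := tendsto_comap.mono_left (inf_le_left.trans inf_le_left)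
  have hxy : Tendsto (fun z : ℕ × ℝ × ℝ => z.2.1 - z.2.2) l (𝓝 d) :=
    tendsto_comap.mono_left inf_le_right
  have hpar : ∀ᶠ z in l, (m z.1 : ℤ) % 2 = (⌊(z.1 : ℝ) * z.2.1⌋ - ⌊(z.1 : ℝ) * z.2.2⌋) % 2 :=
    mem_of_superset (mem_inf_of_left hS) fun z hz => hz.2.2
  have hG : Continuous fun s : ℝ => √(2 / (π * T)) * exp (-s ^ 2 / (2 * T)) := by fun_prop
  have := (tendsto_div_two_pow_mul_choose hT hn (hmT.comp hn)
    (tendsto_floor_mul_sub_floor_mul_div hn hxy) hpar).sub ((hG.tendsto d).comp hxy)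
  simpa [add_sub_assoc] using this

theorem stmt11_general (T : ℝ) (hT : 0 < T) (Tn : ℕ → ℝ) (m : ℕ → ℕ)
    (hm : ∀ n, (m n : ℝ) = Tn n * (n : ℝ) ^ 2)
    (K : ℝ) (hK : ∀ n, |Tn n - T| * (n : ℝ) ^ 2 ≤ K) :
    ∀ ε > (0 : ℝ), ∃ N : ℕ, ∀ n ≥ N, ∀ x ∈ Set.Icc (0 : ℝ) 1, ∀ y ∈ Set.Icc (0 : ℝ) 1,
      (m n : ℤ) % 2 = (⌊(n : ℝ) * x⌋ - ⌊(n : ℝ) * y⌋) % 2 →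
      |((n : ℝ) / 2 ^ (m n)) *
            ((Nat.choose (m n) (((m n : ℤ) + ⌊(n : ℝ) * x⌋ - ⌊(n : ℝ) * y⌋) / 2).toNat : ℕ) : ℝ)
          - Real.sqrt (2 / (π * T)) * Real.exp (-(x - y) ^ 2 / (2 * T))| < ε := by
  have hmT : Tendsto (fun n : ℕ => (m n : ℝ) / n ^ 2) atTop (𝓝 T) :=
    (tendsto_of_abs_sub_mul_le ((tendsto_pow_atTop two_ne_zero).comp tendsto_natCast_atTop_atTop)
      hK).congr' <| by
        filter_upwards [eventually_ne_atTop 0] with n hn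
        rw [hm]
        field_simp
  intro ε hε
  obtain ⟨N, hN⟩ := eventually_atTop.1 <| eventually_comap.1 <| eventually_inf_principal.1 <|
    Metric.tendsto_nhds.1 (tendsto_div_two_pow_mul_choose_sub_gaussian hT hmT) ε hε
  refine ⟨N, fun n hn x hx y hy hpar => ?_⟩
  simpa [Real.dist_eq] using hN n hn (n, x, y) rfl ⟨hx, hy, hpar⟩

/-- De Moivre–Laplace / local CLT, uniformly over endpoints: if `T_n n² ∈ ℕ` and
`sup_n |T_n − T| n² < ∞` for some `T > 0`, then
`Ξ(x,y;n,T_n) = (n/2^{T_n n²}) C(T_n n², (T_n n² + ⌊nx⌋ − ⌊ny⌋)/2)` converges to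
`√(2/(πT)) e^{−(x−y)²/(2T)}`, uniformly over `x, y ∈ [0,1]` with `⌊nx⌋ − ⌊ny⌋` of the
same parity as `T_n n²`. -/
theorem stmt11 (T : ℝ) (hT : 0 < T) (Tn : ℕ → ℝ) (m : ℕ → ℕ)
    (hTn : ∀ n, 0 < Tn n) (hm : ∀ n, (m n : ℝ) = Tn n * (n : ℝ) ^ 2)
    (K : ℝ) (hK : ∀ n, |Tn n - T| * (n : ℝ) ^ 2 ≤ K) :
    ∀ ε > (0 : ℝ), ∃ N : ℕ, ∀ n ≥ N, ∀ x ∈ Set.Icc (0 : ℝ) 1, ∀ y ∈ Set.Icc (0 : ℝ) 1,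
      (m n : ℤ) % 2 = (⌊(n : ℝ) * x⌋ - ⌊(n : ℝ) * y⌋) % 2 →
      |((n : ℝ) / 2 ^ (m n)) *
            ((Nat.choose (m n) (((m n : ℤ) + ⌊(n : ℝ) * x⌋ - ⌊(n : ℝ) * y⌋) / 2).toNat : ℕ) : ℝ)
          - Real.sqrt (2 / (π * T)) * Real.exp (-(x - y) ^ 2 / (2 * T))| < ε :=
  stmt11_general T hT Tn m hm K hK
end
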